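/- arXiv:0912.3328 — 2 statements merged into one kernel-verified Lean document; each statement's English description precedes it below -/
import Mathlib

section
/- If w(t) is a solution of the differential equation dw/dt = Cw - (wᵀCw)w on ℝ^m, where C is a constant symmetric m×m real matrix, and ‖w(0)‖ = 1, then ‖w(t)‖ = 1 for all t. -/
/-- If `w` solves the ALEH `dw/dt = Cw - (wᵀCw)w` with `C` symmetric and
`‖w 0‖ = 1`, then `‖w t‖ = 1` for all `t`. -/
theorem stmt0 (m : ℕ) (C : Matrix (Fin m) (Fin m) ℝ) (hC : C.IsSymm)
    (w : ℝ → EuclideanSpace ℝ (Fin m))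
    (hw : ∀ t : ℝ, HasDerivAt w
      ((WithLp.equiv 2 (Fin m → ℝ)).symm (C.mulVec (w t)) -
        (dotProduct (w t) (C.mulVec (w t))) • (w t)) t)
    (h0 : ‖w 0‖ = 1) :
    ∀ t : ℝ, ‖w t‖ = 1 := by
  set lam : ℝ → ℝ := fun t => dotProduct (w t) (C.mulVec (w t)) with hlam
  have hwc : Continuous w := by
    rw [continuous_iff_continuousAt]
    exact fun t => (hw t).continuousAt
  have hcoord : ∀ i, Continuous fun t => w t i := fun i => (continuous_apply i).comp ((PiLp.continuous_ofLp 2 _).comp hwc)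
  have hlamc : Continuous lam := by
    simp only [hlam, dotProduct, Matrix.mulVec]
    exact continuous_finset_sum _ fun i _ =>
      (hcoord i).mul (continuous_finset_sum _ fun j _ => (continuous_const.mul (hcoord j)))
  -- f t = ⟪w t, w t⟫
  set f : ℝ → ℝ := fun t => @inner ℝ _ _ (w t) (w t) with hfdef
  have hinner : ∀ t, (@inner ℝ _ _ (w t)
      ((WithLp.equiv 2 (Fin m → ℝ)).symm (C.mulVec (w t)))) = lam t := by
    intro t
    simp only [hlam, PiLp.inner_apply, RCLike.inner_apply, dotProduct,
      WithLp.equiv_symm_apply, WithLp.ofLp_toLp, conj_trivial, mul_comm]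
  have hf : ∀ t, HasDerivAt f (-2 * lam t * (f t - 1)) t := by
    intro t
    have h := (hw t).inner ℝ (hw t)
    have hwx : @inner ℝ _ _ (w t) ((WithLp.equiv 2 (Fin m → ℝ)).symm (C.mulVec (w t)) -
        lam t • (w t)) = lam t - lam t * f t := by
      rw [inner_sub_right, inner_smul_right, hinner]
    have hxw : @inner ℝ _ _ ((WithLp.equiv 2 (Fin m → ℝ)).symm (C.mulVec (w t)) -
        lam t • (w t)) (w t) = lam t - lam t * f t := by
      rw [real_inner_comm]; exact hwx
    convert h using 1
    · rfl
    · rfl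
    rw [hwx, hxw]; ring
  -- integrating factor
  set G : ℝ → ℝ := fun t => ∫ s in (0:ℝ)..t, lam s with hGdef
  have hG : ∀ t, HasDerivAt G (lam t) t := fun t =>
    (hlamc.integral_hasStrictDerivAt 0 t).hasDerivAt
  set F : ℝ → ℝ := fun t => (f t - 1) * Real.exp (2 * G t) with hFdef
  have hF : ∀ t, HasDerivAt F 0 t := by
    intro t
    have h1 : HasDerivAt (fun t => f t - 1) (-2 * lam t * (f t - 1)) t :=
      (hf t).sub_const 1
    have h2 : HasDerivAt (fun t => Real.exp (2 * G t))
        (Real.exp (2 * G t) * (2 * lam t)) t :=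
      (((hG t).const_mul 2).exp)
    have := h1.mul h2
    convert this using 1
    · rfl
    · rfl
    · rfl
    ring
  have hFconst : ∀ t, F t = F 0 := by
    intro t
    have : ∀ x, deriv F x = 0 := fun x => (hF x).deriv
    have hd : Differentiable ℝ F := fun x => (hF x).differentiableAt
    exact is_const_of_deriv_eq_zero hd this t 0
  have hf0 : f 0 = 1 := by
    have h := real_inner_self_eq_norm_sq (w 0)
    simp only [hfdef]
    rw [h, h0]; norm_num
  intro t
  have hFt := hFconst t
  have hF0 : F 0 = 0 := by simp [hFdef, hf0]
  rw [hF0] at hFt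
  have hexp := Real.exp_pos (2 * G t)
  have hft : f t = 1 := by
    rcases mul_eq_zero.mp hFt with h | h
    · linarith
    · exact absurd h hexp.ne'
  have hn := real_inner_self_eq_norm_sq (w t)
  rw [hfdef] at hft
  nlinarith [norm_nonneg (w t)]
end

section
/- Let L(ρ) = -2tr(Cρ) on P̂_m. The gradient of L with respect to the SLD Fisher metric is grad L(ρ) = -(ρC + Cρ) + 2tr(ρC)ρ; that is, for every Hermitian traceless Ξ, ⟪-(ρC+Cρ)+2tr(ρC)ρ, Ξ⟫_ρ = d/dτ|₀ L(r(τ)) for any smooth curve r in P̂_m with r(0)=ρ, r'(0)=Ξ. Equivalently, ½tr[ρ(MK + KM)] with M = L_ρ(-(ρC+Cρ)+2tr(ρC)ρ), K = L_ρ(Ξ), equals -2tr(CΞ). -/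
open scoped ComplexOrder

/-- The gradient of `L(ρ) = -2 tr(Cρ)` with respect to the SLD Fisher metric is
`grad L(ρ) = -(ρC + Cρ) + 2 tr(ρC) ρ`: for every Hermitian traceless `Ξ`, with
`M = L_ρ(-(ρC+Cρ)+2tr(ρC)ρ)` and `K = L_ρ(Ξ)` the SLDs, one has
`½ tr[ρ(MK + KM)] = -2 tr(CΞ)`. -/
theorem stmt18 (m : ℕ) (c : Fin m → ℝ)
    (ρ : Matrix (Fin m) (Fin m) ℂ)
    (hρH : ρ.IsHermitian) (hρpos : ρ.PosDef) (hρtr : ρ.trace = 1)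
    (Ξ : Matrix (Fin m) (Fin m) ℂ) (hΞH : Ξ.IsHermitian) (hΞtr : Ξ.trace = 0)
    (M K : Matrix (Fin m) (Fin m) ℂ) (hMH : M.IsHermitian) (hKH : K.IsHermitian)
    (hM : (1/2 : ℂ) • (ρ * M + M * ρ) =
      -(ρ * Matrix.diagonal (fun k => (c k : ℂ)) +
          Matrix.diagonal (fun k => (c k : ℂ)) * ρ) +
        (2 * (ρ * Matrix.diagonal (fun k => (c k : ℂ))).trace) • ρ)
    (hK : (1/2 : ℂ) • (ρ * K + K * ρ) = Ξ) :
    (1/2 : ℂ) * (ρ * (M * K + K * M)).trace =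
      -2 * (Matrix.diagonal (fun k => (c k : ℂ)) * Ξ).trace := by
  set C := Matrix.diagonal (fun k => (c k : ℂ)) with hC
  -- trace of ρK vanishes
  have hρK : (ρ * K).trace = 0 := by
    have h := congrArg Matrix.trace hK
    rw [Matrix.trace_smul, Matrix.trace_add, Matrix.trace_mul_comm K ρ, hΞtr,
      smul_eq_mul] at h
    linear_combination h
  -- multiply hM by K on the right and take traces
  have key := congrArg (fun X => (X * K).trace) hM
  simp only [Matrix.smul_mul, Matrix.add_mul, Matrix.neg_mul, Matrix.trace_smul,
    Matrix.trace_add, Matrix.trace_neg, smul_eq_mul] at key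
  rw [Matrix.mul_assoc ρ C K, Matrix.mul_assoc C ρ K] at key
  rw [hρK, mul_zero] at key
  -- rewrite Ξ via hK on the RHS of the goal
  rw [← hK, Matrix.mul_smul, Matrix.trace_smul, Matrix.mul_add,
    Matrix.trace_add, smul_eq_mul]
  -- cyclic rearrangements
  have c1 : (ρ * (M * K)).trace = ((ρ * M) * K).trace := by
    rw [Matrix.mul_assoc]
  have c2 : (ρ * (K * M)).trace = ((M * ρ) * K).trace := by
    rw [Matrix.trace_mul_comm, Matrix.mul_assoc, Matrix.trace_mul_comm,
      Matrix.mul_assoc]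
  have c3 : (C * (K * ρ)).trace = (ρ * (C * K)).trace := by
    rw [← Matrix.mul_assoc, Matrix.trace_mul_cycle, Matrix.mul_assoc]
  rw [Matrix.mul_add, Matrix.trace_add, c1, c2, c3]
  linear_combination key
end
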